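/- Let G be a finite simple bipartite connected graph. Then G has a perfect matching if and only if |A| ≤ |N_G(A)| for every independent set of vertices A of G. -/

import Mathlib

/-!
A perfect matching sends every vertex to its partner injectively, and the partners of `A` lie in
`N(A)`. Conversely, split an arbitrary vertex set `A` along a 2-colouring: both pieces are
independent, and their neighbourhoods lie in opposite colour classes, hence are disjoint. So the
Hall condition for independent sets gives it for all sets, and Hall's theorem for bipartite graphs
yields a perfect matching.
-/

/-- A graph is bipartite if its vertices can be 2-coloured so that adjacent
vertices get distinct colours. -/
def IsBipartite {V : Type} (G : SimpleGraph V) : Prop :=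
  ∃ f : V → Bool, ∀ i j : V, G.Adj i j → f i ≠ f j

namespace SimpleGraph

variable {V : Type*} {G : SimpleGraph V}

variable (G) in
theorem card_filter_exists_adj_eq_ncard [Fintype V] [DecidableRel G.Adj] (A : Finset V) :
    (Finset.univ.filter fun v ↦ ∃ u ∈ A, G.Adj u v).card =
      (⋃ x ∈ (A : Set V), G.neighborSet x).ncard := by
  rw [← Set.ncard_coe_finset]
  congr 1
  ext v
  simp

theorem Subgraph.IsPerfectMatching.ncard_le_ncard_iUnion_neighborSet [Finite V]
    {M : G.Subgraph} (hM : M.IsPerfectMatching) (s : Set V) :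
    s.ncard ≤ (⋃ x ∈ s, G.neighborSet x).ncard := by
  choose partner hpartner using fun v ↦ (Subgraph.isPerfectMatching_iff.mp hM v).exists
  exact Set.ncard_le_ncard_of_injOn partner
    (fun v hv ↦ Set.mem_biUnion hv (M.adj_sub (hpartner v)))
    (fun a _ b _ hab ↦ hM.1.eq_of_adj_right (hpartner a) (hab ▸ hpartner b))

theorem IsBipartiteWith.isIndepSet_of_subset_left {s t u : Set V} (h : G.IsBipartiteWith s t)
    (hu : u ⊆ s) : G.IsIndepSet u :=
  fun _ hv _ hw _ hadj ↦ h.disjoint.notMem_of_mem_left (hu hw) (h.mem_of_mem_adj (hu hv) hadj)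

theorem IsBipartiteWith.iUnion_neighborSet_subset {s t u : Set V} (h : G.IsBipartiteWith s t)
    (hu : u ⊆ s) : (⋃ x ∈ u, G.neighborSet x) ⊆ t :=
  Set.iUnion₂_subset fun _ hx ↦ isBipartiteWith_neighborSet_subset h (hu hx)

theorem IsBipartiteWith.ncard_le_ncard_iUnion_neighborSet [Finite V] {s t : Set V}
    (h : G.IsBipartiteWith s t) (hcover : s ∪ t = Set.univ)
    (hind : ∀ u, G.IsIndepSet u → u.ncard ≤ (⋃ x ∈ u, G.neighborSet x).ncard) (u : Set V) :
    u.ncard ≤ (⋃ x ∈ u, G.neighborSet x).ncard := by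
  have hsplit : u ⊆ (u ∩ s) ∪ (u ∩ t) := by
    rw [← Set.inter_union_distrib_left, hcover, Set.inter_univ]
  have hdisj : Disjoint (⋃ x ∈ u ∩ s, G.neighborSet x) (⋃ x ∈ u ∩ t, G.neighborSet x) :=
    h.disjoint.symm.mono (h.iUnion_neighborSet_subset Set.inter_subset_right)
      (h.symm.iUnion_neighborSet_subset Set.inter_subset_right)
  calc u.ncard ≤ (u ∩ s).ncard + (u ∩ t).ncard :=
        (Set.ncard_le_ncard hsplit).trans (Set.ncard_union_le _ _)
    _ ≤ (⋃ x ∈ u ∩ s, G.neighborSet x).ncard + (⋃ x ∈ u ∩ t, G.neighborSet x).ncard :=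
      add_le_add (hind _ (h.isIndepSet_of_subset_left Set.inter_subset_right))
        (hind _ (h.symm.isIndepSet_of_subset_left Set.inter_subset_right))
    _ = ((⋃ x ∈ u ∩ s, G.neighborSet x) ∪ ⋃ x ∈ u ∩ t, G.neighborSet x).ncard :=
      (Set.ncard_union_eq hdisj).symm
    _ ≤ (⋃ x ∈ u, G.neighborSet x).ncard :=
      Set.ncard_le_ncard (Set.union_subset (Set.biUnion_subset_biUnion_left Set.inter_subset_left)
        (Set.biUnion_subset_biUnion_left Set.inter_subset_left))

end SimpleGraph

theorem IsBipartite.exists_isBipartiteWith {V : Type} {G : SimpleGraph V} (h : IsBipartite G) :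
    ∃ s t : Set V, G.IsBipartiteWith s t ∧ s ∪ t = Set.univ := by
  obtain ⟨c, hc⟩ := h
  refine ⟨{v | c v = true}, {v | c v = false}, ⟨?_, fun v w hadj ↦ ?_⟩, ?_⟩
  · exact Set.disjoint_left.mpr fun v hv hv' ↦ by simp_all
  · have := hc v w hadj
    cases hv : c v <;> cases hw : c w <;> simp_all
  · ext v; cases c v <;> simp

theorem marriage_theorem_general {V : Type} [Fintype V]
    (G : SimpleGraph V) [DecidableRel G.Adj]
    (hbip : IsBipartite G) :
    (∃ M : G.Subgraph, M.IsPerfectMatching) ↔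
      ∀ A : Finset V, (∀ u ∈ A, ∀ w ∈ A, ¬ G.Adj u w) →
        A.card ≤ (Finset.univ.filter (fun v => ∃ u ∈ A, G.Adj u v)).card := by
  have hindep (A : Finset V) : (∀ u ∈ A, ∀ w ∈ A, ¬ G.Adj u w) ↔ G.IsIndepSet (A : Set V) :=
    ⟨fun h u hu w hw _ ↦ h u hu w hw, fun h u hu w hw hadj ↦ h hu hw hadj.ne hadj⟩
  simp only [hindep, G.card_filter_exists_adj_eq_ncard, ← Set.ncard_coe_finset]
  constructor
  · rintro ⟨M, hM⟩ A -
    exact hM.ncard_le_ncard_iUnion_neighborSet A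
  · intro hhall
    obtain ⟨s, t, hst, hcover⟩ := hbip.exists_isBipartiteWith
    refine G.exists_isPerfectMatching_of_forall_ncard_le hst
      (hst.ncard_le_ncard_iUnion_neighborSet hcover fun u hu ↦ ?_)
    obtain ⟨A, rfl⟩ := u.toFinite.exists_finset_coe
    exact hhall A hu

theorem marriage_theorem {V : Type} [Fintype V] [DecidableEq V]
    (G : SimpleGraph V) [DecidableRel G.Adj]
    (hbip : IsBipartite G) (hconn : G.Connected) :
    (∃ M : G.Subgraph, M.IsPerfectMatching) ↔
      ∀ A : Finset V, (∀ u ∈ A, ∀ w ∈ A, ¬ G.Adj u w) →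
        A.card ≤ (Finset.univ.filter (fun v => ∃ u ∈ A, G.Adj u v)).card :=
  marriage_theorem_general G hbip
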